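/- Assume every nodal concentration value is strictly positive (c⁺_{j−1/2} > 0 and c⁻_{j+1/2} > 0 for every cell j), that α > max{u⁺_{j+1/2}, 0} for every interior node 1 ≤ j ≤ N−1, that 6αλ ≤ Φ⁰_m := min over 2 ≤ j ≤ N−1 of Φ_{j+1/2}, and that 6λ(α − u⁺_{j−1/2}) ≤ Φ_{j−1/2} for every 2 ≤ j ≤ N−1. Then for every j with 2 ≤ j ≤ N−1 the convection part H_j^c := r̄_j/3 + λ(ûc_{j−1/2} − ûc_{j+1/2}) satisfies H_j^c > 0. -/

import Mathlib

/-! Grouping `H_j^c` by the four nodal traces it involves, the traces `c⁺_{j-1/2}` and `c⁻_{j+1/2}`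
of cell `j` get the coefficients `Φ_{j-1/2}/6 - λ(α - u⁺_{j-1/2})` and `Φ_{j+1/2}/6 - λα`, which the
CFL conditions make nonnegative, while the neighbouring traces `c⁻_{j-1/2}` and `c⁺_{j+1/2}` get the
positive coefficients `λα` and `λ(α - u⁺_{j+1/2})`. -/

noncomputable section

namespace DG1D

/-- Gauss constant `μ₁ = (3+√3)/6`. -/
def mu1 : ℝ := (3 + Real.sqrt 3) / 6

/-- Gauss constant `μ₂ = (3-√3)/6`. -/
def mu2 : ℝ := (3 - Real.sqrt 3) / 6

/-- Cell average `r̄_j = (r⁺_{j-1/2} + r⁻_{j+1/2})/2`.  Here `Φ j` denotes the nodal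
porosity value `Φ_{j+1/2}` (so `Φ (j-1)` is `Φ_{j-1/2}`), `cP j` denotes the left-node
concentration trace `c⁺_{j-1/2}` of cell `j`, and `cM j` denotes the right-node trace
`c⁻_{j+1/2}` of cell `j`. -/
def rbar (Φ cP cM : ℕ → ℝ) (j : ℕ) : ℝ :=
  (cP j * Φ (j - 1) + cM j * Φ j) / 2

/-- Convective flux `ûc_{j+1/2} = u⁺_{j+1/2}·c⁺_{j+1/2} - α·[c]_{j+1/2}` at the interior
node `j+1/2` (`u j` denotes `u⁺_{j+1/2}`; `c⁺_{j+1/2} = cP (j+1)`, `c⁻_{j+1/2} = cM j`). -/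
def uc (u cP cM : ℕ → ℝ) (α : ℝ) (j : ℕ) : ℝ :=
  u j * cP (j + 1) - α * (cP (j + 1) - cM j)

/-- Diffusive flux `F̂_{j+1/2} = (D⁻·(c_x)⁻ + D⁺·(c_x)⁺)/2 + (α̃/Δx)·[c]_{j+1/2}` at the
interior node `j+1/2`, with `(c_x)⁻_{j+1/2} = (c⁻_{j+1/2} - c⁺_{j-1/2})/Δx` and
`(c_x)⁺_{j+1/2} = (c⁻_{j+3/2} - c⁺_{j+1/2})/Δx`. -/
def Fhat (Dm Dp cP cM : ℕ → ℝ) (αt Δx : ℝ) (j : ℕ) : ℝ :=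
  (Dm j * ((cM j - cP j) / Δx) + Dp j * ((cM (j + 1) - cP (j + 1)) / Δx)) / 2
    + (αt / Δx) * (cP (j + 1) - cM j)

/-- Value of the linear function `r` at Gauss point `i` of cell `j`:
`r(x_j^1) = μ₁·r⁺_{j-1/2} + μ₂·r⁻_{j+1/2}`, `r(x_j^2) = μ₂·r⁺_{j-1/2} + μ₁·r⁻_{j+1/2}`. -/
def rG (Φ cP cM : ℕ → ℝ) (j : ℕ) (i : Fin 2) : ℝ :=
  if i = 0 then mu1 * (cP j * Φ (j - 1)) + mu2 * (cM j * Φ j)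
  else mu2 * (cP j * Φ (j - 1)) + mu1 * (cM j * Φ j)

/-- Value of the linear function `c` at Gauss point `i` of cell `j`. -/
def cG (cP cM : ℕ → ℝ) (j : ℕ) (i : Fin 2) : ℝ :=
  if i = 0 then mu1 * cP j + mu2 * cM j else mu2 * cP j + mu1 * cM j

/-- Value of the linear interpolant of `Φ` at Gauss point `i` of cell `j`. -/
def phiG (Φ : ℕ → ℝ) (j : ℕ) (i : Fin 2) : ℝ :=
  if i = 0 then mu1 * Φ (j - 1) + mu2 * Φ j else mu2 * Φ (j - 1) + mu1 * Φ j

/-- Convective flux with the boundary conventions `ûc_{1/2} = ûc_{N+1/2} = 0`. -/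
def ucB (N : ℕ) (u cP cM : ℕ → ℝ) (α : ℝ) (j : ℕ) : ℝ :=
  if 1 ≤ j ∧ j ≤ N - 1 then uc u cP cM α j else 0

/-- Diffusive flux with the boundary conventions `F̂_{1/2} = F̂_{N+1/2} = 0`. -/
def FhatB (N : ℕ) (Dm Dp cP cM : ℕ → ℝ) (αt Δx : ℝ) (j : ℕ) : ℝ :=
  if 1 ≤ j ∧ j ≤ N - 1 then Fhat Dm Dp cP cM αt Δx j else 0

/-- Velocity flux `û_{j+1/2}` with boundary conventions `û_{1/2} = û_{N+1/2} = 0`. -/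
def uhatB (N : ℕ) (u : ℕ → ℝ) (j : ℕ) : ℝ :=
  if 1 ≤ j ∧ j ≤ N - 1 then u j else 0

/-- The Euler-forward cell-average update
`r̄_j^{new} = r̄_j + λ(ûc_{j-1/2} - ûc_{j+1/2}) - λ(F̂_{j-1/2} - F̂_{j+1/2})
  + (Δt/2)·∑_{i=1,2}(c̃_j^i·q_j^i - z₁·r(x_j^i)·P_j^i)`. -/
def rbarnew (N : ℕ) (Φ cP cM u Dm Dp : ℕ → ℝ) (q ct P : ℕ → Fin 2 → ℝ)
    (α αt z1 Δx Δt : ℝ) (j : ℕ) : ℝ :=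
  rbar Φ cP cM j
    + (Δt / Δx) * (ucB N u cP cM α (j - 1) - ucB N u cP cM α j)
    - (Δt / Δx) * (FhatB N Dm Dp cP cM αt Δx (j - 1) - FhatB N Dm Dp cP cM αt Δx j)
    + (Δt / 2) * ∑ i : Fin 2, (ct j i * q j i - z1 * rG Φ cP cM j i * P j i)

section ConvectionPart

variable {Φ cP cM u : ℕ → ℝ} {α lam : ℝ} {j : ℕ}

theorem convection_part_eq (hj : 1 ≤ j) :
    rbar Φ cP cM j / 3 + lam * (uc u cP cM α (j - 1) - uc u cP cM α j) =
      (Φ (j - 1) / 6 - lam * (α - u (j - 1))) * cP j + (Φ j / 6 - lam * α) * cM j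
        + lam * α * cM (j - 1) + lam * (α - u j) * cP (j + 1) := by
  obtain ⟨i, rfl⟩ : ∃ i, j = i + 1 := ⟨j - 1, by omega⟩
  simp only [rbar, uc, Nat.add_sub_cancel]
  ring

theorem convection_part_pos (hj : 1 ≤ j) (hlam : 0 < lam) (hα : 0 < α) (hu : u j < α)
    (hCFL_left : lam * (α - u (j - 1)) ≤ Φ (j - 1) / 6) (hCFL_right : lam * α ≤ Φ j / 6)
    (hcP : 0 ≤ cP j) (hcM : 0 ≤ cM j) (hcM_prev : 0 < cM (j - 1)) (hcP_next : 0 < cP (j + 1)) :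
    0 < rbar Φ cP cM j / 3 + lam * (uc u cP cM α (j - 1) - uc u cP cM α j) := by
  rw [convection_part_eq hj]
  have h_left : 0 ≤ (Φ (j - 1) / 6 - lam * (α - u (j - 1))) * cP j :=
    mul_nonneg (by linarith) hcP
  have h_right : 0 ≤ (Φ j / 6 - lam * α) * cM j := mul_nonneg (by linarith) hcM
  have h_prev : 0 < lam * α * cM (j - 1) := by positivity
  have h_next : 0 < lam * (α - u j) * cP (j + 1) :=
    mul_pos (mul_pos hlam (sub_pos.2 hu)) hcP_next
  linarith

end ConvectionPart

theorem convection_part_positive_1d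
    (N : ℕ) (Δx Δt : ℝ) (hΔx : 0 < Δx) (hΔt : 0 < Δt)
    (Φ cP cM u : ℕ → ℝ) (α : ℝ)
    -- every nodal concentration value strictly positive
    (hc : ∀ j, 1 ≤ j → j ≤ N → 0 < cP j ∧ 0 < cM j)
    -- α > max{u⁺_{j+1/2}, 0} at every interior node 1 ≤ j ≤ N-1
    (hα : ∀ j, 1 ≤ j → j ≤ N - 1 → max (u j) 0 < α)
    -- 6αλ ≤ Φ⁰_m = min over 2 ≤ j ≤ N-1 of Φ_{j+1/2}
    (hCFL1 : ∀ j, 2 ≤ j → j ≤ N - 1 → 6 * α * (Δt / Δx) ≤ Φ j)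
    -- 6λ(α - u⁺_{j-1/2}) ≤ Φ_{j-1/2} for 2 ≤ j ≤ N-1
    (hCFL2 : ∀ j, 2 ≤ j → j ≤ N - 1 → 6 * (Δt / Δx) * (α - u (j - 1)) ≤ Φ (j - 1)) :
    ∀ j, 2 ≤ j → j ≤ N - 1 →
      0 < rbar Φ cP cM j / 3
            + (Δt / Δx) * (uc u cP cM α (j - 1) - uc u cP cM α j) := by
  intro j hj2 hjN
  have hmax := hα j (by omega) hjN
  have hCFL_left := hCFL2 j hj2 hjN
  have hCFL_right := hCFL1 j hj2 hjN
  exact convection_part_pos (by omega) (div_pos hΔt hΔx)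
    ((le_max_right _ _).trans_lt hmax) ((le_max_left _ _).trans_lt hmax)
    (by linarith) (by linarith)
    (hc j (by omega) (by omega)).1.le (hc j (by omega) (by omega)).2.le
    (hc (j - 1) (by omega) (by omega)).2 (hc (j + 1) (by omega) (by omega)).1

end DG1D
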